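/- Let (A,B) be controllable, B of full column rank m with orthogonal complement spanned by the columns of Q₂, and let X_r ∈ ℝ^{n×r} (r < n) have orthonormal columns with Q₂ᵀ A X_r = Q₂ᵀ X_r T_r for some T_r ∈ ℝ^{r×r}. Let λ ∈ ℝ and let the columns of S = [S₁; S₂] (S₁ ∈ ℝ^{n×m}, S₂ ∈ ℝ^{r×m}) form an orthonormal basis of the null space of M = [[Q₂ᵀ(A - λIₙ), -Q₂ᵀX_r],[X_rᵀ, 0]]. Then S₁ ≠ 0. -/

import Mathlib

/-!
If `S₁ = 0`, the null-space equation gives `Q₂ᵀ X S₂ = 0`, so `X S₂ = Q₁ W` with `W = Q₁ᵀ X S₂`.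
Both `X S₂` and `Q₁` have orthonormal columns, so `W` is orthogonal and `Q₁ = X S₂ Wᵀ`: the range
of `B = Q₁ R` lies in the column space of `X`. The relation `Q₂ᵀ A X = Q₂ᵀ X T` says that `A X` lies
in the column space of `[X, Q₁]`, which is then the column space of `X` alone. Hence the column
space of `X` is `A`-invariant and contains the range of `B`, so it contains the whole Krylov space
of `(A, B)`, whose dimension would then be at most `r < n`.
-/

open Matrix

namespace Matrix

variable {R n m p r : Type*} [Fintype n]

def controllabilityMatrix [Semiring R] [DecidableEq n] (A : Matrix n n R) (B : Matrix n m R)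
    (N : ℕ) : Matrix n (Fin N × m) R :=
  of fun i q => (A ^ (q.1 : ℕ) * B) i q.2

section Semiring

variable [Semiring R] [Fintype r] [DecidableEq n] [DecidableEq r]

theorem pow_mul_eq_mul_pow_of_mul_eq {A : Matrix n n R} {X : Matrix n r R} {T : Matrix r r R}
    (h : A * X = X * T) (k : ℕ) : A ^ k * X = X * T ^ k := by
  induction k with
  | zero => simp
  | succ k ih => rw [pow_succ, pow_succ, Matrix.mul_assoc, h, ← Matrix.mul_assoc, ih,
      Matrix.mul_assoc]

theorem mul_controllabilityMatrix {A : Matrix n n R} {X : Matrix n r R} {T : Matrix r r R}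
    (h : A * X = X * T) (D : Matrix r m R) (N : ℕ) :
    X * controllabilityMatrix T D N = controllabilityMatrix A (X * D) N := by
  ext i q
  change (X * (T ^ (q.1 : ℕ) * D)) i q.2 = (A ^ (q.1 : ℕ) * (X * D)) i q.2
  rw [← Matrix.mul_assoc, ← Matrix.mul_assoc, pow_mul_eq_mul_pow_of_mul_eq h]

end Semiring

section CommRing

variable [CommRing R]

theorem rank_controllabilityMatrix_le_of_mul_eq [StrongRankCondition R] [Fintype m] [Fintype r]
    [DecidableEq n] [DecidableEq r] {A : Matrix n n R} {X : Matrix n r R} {T : Matrix r r R}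
    (h : A * X = X * T) (D : Matrix r m R) (N : ℕ) :
    (controllabilityMatrix A (X * D) N).rank ≤ Fintype.card r := by
  rw [← mul_controllabilityMatrix h]
  exact (rank_mul_le_left _ _).trans (rank_le_card_width X)

variable {Q₁ : Matrix n m R} {Q₂ : Matrix n p R}

theorem transpose_mul_self_eq_one_of_fromCols [DecidableEq m] [DecidableEq p]
    (hQ : (fromCols Q₁ Q₂)ᵀ * fromCols Q₁ Q₂ = 1) : Q₁ᵀ * Q₁ = 1 := by
  rw [transpose_fromCols, fromRows_mul_fromCols, ← fromBlocks_one, fromBlocks_inj] at hQ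
  exact hQ.1

theorem mul_transpose_add_mul_transpose_eq_one [Fintype m] [Fintype p]
    [DecidableEq n] [DecidableEq m] [DecidableEq p]
    (e : n ≃ m ⊕ p) (hQ : (fromCols Q₁ Q₂)ᵀ * fromCols Q₁ Q₂ = 1) :
    Q₁ * Q₁ᵀ + Q₂ * Q₂ᵀ = 1 := by
  rw [transpose_fromCols, ← fromCols_mul_fromRows_eq_one_comm e] at hQ
  rwa [fromCols_mul_fromRows] at hQ

theorem eq_mul_transpose_mul_of_transpose_mul_eq_zero [Fintype m] [Fintype p] [DecidableEq n]
    {ι : Type*} (hQQ : Q₁ * Q₁ᵀ + Q₂ * Q₂ᵀ = 1) {V : Matrix n ι R} (hV : Q₂ᵀ * V = 0) :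
    V = Q₁ * (Q₁ᵀ * V) := calc
  V = (Q₁ * Q₁ᵀ + Q₂ * Q₂ᵀ) * V := by rw [hQQ, Matrix.one_mul]
  _ = Q₁ * (Q₁ᵀ * V) := by simp only [Matrix.add_mul, Matrix.mul_assoc, hV, Matrix.mul_zero,
    add_zero]

theorem eq_mul_transpose_of_eq_mul [Fintype m] [DecidableEq m] {V : Matrix n m R} {W : Matrix m m R}
    (hQ : Q₁ᵀ * Q₁ = 1) (hV : Vᵀ * V = 1) (hVW : V = Q₁ * W) : Q₁ = V * Wᵀ := by
  have hW : Wᵀ * W = 1 := by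
    rwa [hVW, transpose_mul, Matrix.mul_assoc, ← Matrix.mul_assoc Q₁ᵀ, hQ, Matrix.one_mul] at hV
  rw [hVW, Matrix.mul_assoc, mul_eq_one_comm.mp hW, Matrix.mul_one]

end CommRing

end Matrix

theorem stmt6_general (n m p r : ℕ) (hmp : m + p = n) (hr : r < n)
    (A : Matrix (Fin n) (Fin n) ℝ) (B : Matrix (Fin n) (Fin m) ℝ)
    (hctrb : (Matrix.of fun (i : Fin n) (q : Fin n × Fin m) =>
      (A ^ (q.1 : ℕ) * B) i q.2).rank = n)
    (Q₁ : Matrix (Fin n) (Fin m) ℝ) (Q₂ : Matrix (Fin n) (Fin p) ℝ)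
    (R : Matrix (Fin m) (Fin m) ℝ)
    (hQ : (Matrix.fromCols Q₁ Q₂)ᵀ * Matrix.fromCols Q₁ Q₂ = 1)
    (hB : B = Q₁ * R)
    (X : Matrix (Fin n) (Fin r) ℝ) (hX : Xᵀ * X = 1)
    (T : Matrix (Fin r) (Fin r) ℝ) (hT : Q₂ᵀ * A * X = Q₂ᵀ * X * T)
    (lam : ℝ)
    (M : Matrix (Fin p ⊕ Fin r) (Fin n ⊕ Fin r) ℝ)
    (hM : M = Matrix.fromBlocks (Q₂ᵀ * (A - lam • 1)) (-(Q₂ᵀ * X)) Xᵀ 0)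
    (S₁ : Matrix (Fin n) (Fin m) ℝ) (S₂ : Matrix (Fin r) (Fin m) ℝ)
    (hnull : M * Matrix.fromRows S₁ S₂ = 0)
    (horth : (Matrix.fromRows S₁ S₂)ᵀ * Matrix.fromRows S₁ S₂ = 1) :
    S₁ ≠ 0 := by
  rintro rfl
  have hS₂ : S₂ᵀ * S₂ = 1 := by
    simpa [transpose_fromRows, fromCols_mul_fromRows] using horth
  have hQ₂XS₂ : Q₂ᵀ * (X * S₂) = 0 := by
    rw [hM, fromBlocks_mul_fromRows, ← fromRows_zero, fromRows_ext_iff] at hnull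
    simpa [Matrix.mul_assoc] using hnull.1
  have hQQ := mul_transpose_add_mul_transpose_eq_one (finSumFinEquiv.trans (finCongr hmp)).symm hQ
  obtain ⟨W, hW⟩ : ∃ W, X * S₂ = Q₁ * W :=
    ⟨_, eq_mul_transpose_mul_of_transpose_mul_eq_zero hQQ hQ₂XS₂⟩
  have hQ₁ : Q₁ = X * (S₂ * Wᵀ) := by
    rw [← Matrix.mul_assoc]
    refine eq_mul_transpose_of_eq_mul (transpose_mul_self_eq_one_of_fromCols hQ) ?_ hW
    rw [transpose_mul, Matrix.mul_assoc, ← Matrix.mul_assoc Xᵀ, hX, Matrix.one_mul, hS₂]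
  obtain ⟨G, hG⟩ : ∃ G, A * X - X * T = Q₁ * G :=
    ⟨_, eq_mul_transpose_mul_of_transpose_mul_eq_zero hQQ (by
      rw [Matrix.mul_sub, ← Matrix.mul_assoc, ← Matrix.mul_assoc, hT, sub_self])⟩
  have hAX : A * X = X * (T + S₂ * Wᵀ * G) := by
    rw [Matrix.mul_add, ← sub_eq_iff_eq_add', hG, hQ₁]
    simp only [Matrix.mul_assoc]
  have hrank := rank_controllabilityMatrix_le_of_mul_eq hAX (S₂ * Wᵀ * R) n
  rw [← Matrix.mul_assoc, ← hQ₁, ← hB, controllabilityMatrix, hctrb, Fintype.card_fin] at hrank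
  omega

/-- If the columns of `S = [S₁; S₂]` form an orthonormal basis of the null space of the
bordered matrix `M`, then `S₁ ≠ 0`. -/
theorem stmt6 (n m p r : ℕ) (hmp : m + p = n) (hr : r < n)
    (A : Matrix (Fin n) (Fin n) ℝ) (B : Matrix (Fin n) (Fin m) ℝ)
    (hctrb : (Matrix.of fun (i : Fin n) (q : Fin n × Fin m) =>
      (A ^ (q.1 : ℕ) * B) i q.2).rank = n)
    (Q₁ : Matrix (Fin n) (Fin m) ℝ) (Q₂ : Matrix (Fin n) (Fin p) ℝ)
    (R : Matrix (Fin m) (Fin m) ℝ) (hR : IsUnit R.det)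
    (hQ : (Matrix.fromCols Q₁ Q₂)ᵀ * Matrix.fromCols Q₁ Q₂ = 1)
    (hB : B = Q₁ * R)
    (X : Matrix (Fin n) (Fin r) ℝ) (hX : Xᵀ * X = 1)
    (T : Matrix (Fin r) (Fin r) ℝ) (hT : Q₂ᵀ * A * X = Q₂ᵀ * X * T)
    (lam : ℝ)
    (M : Matrix (Fin p ⊕ Fin r) (Fin n ⊕ Fin r) ℝ)
    (hM : M = Matrix.fromBlocks (Q₂ᵀ * (A - lam • 1)) (-(Q₂ᵀ * X)) Xᵀ 0)
    (S₁ : Matrix (Fin n) (Fin m) ℝ) (S₂ : Matrix (Fin r) (Fin m) ℝ)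
    (hnull : M * Matrix.fromRows S₁ S₂ = 0)
    (horth : (Matrix.fromRows S₁ S₂)ᵀ * Matrix.fromRows S₁ S₂ = 1)
    (hspan : ∀ v : Fin n ⊕ Fin r → ℝ, M.mulVec v = 0 →
      ∃ c : Fin m → ℝ, v = (Matrix.fromRows S₁ S₂).mulVec c) :
    S₁ ≠ 0 :=
  stmt6_general n m p r hmp hr A B hctrb Q₁ Q₂ R hQ hB X hX T hT lam M hM S₁ S₂ hnull horth
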